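/- For the exponential fading model, E[(z1 − z2)²·1{z1 ≥ z2}] = 2/(1+γ) and E[(z1² − z2²)·1{z1 ≥ z2}] = 2(1+2γ)/(1+γ)². -/

import Mathlib

open MeasureTheory ProbabilityTheory Filter Set

/-!
By memorylessness, given `z2 = y ≥ 0` the event `z1 ≥ y` has weight `e^{-y}` and on it the
excess `z1 - y` is again `Exp(1)`. Hence the conditional expectations are `2e^{-y}` for
`(z1 - z2)²` and, via `x² - y² = (x - y)² + 2y(x - y)`, `(2 + 2y)e^{-y}` for `z1² - z2²`.
Integrating these against `Exp(λ)`, `λ = 1/γ`, uses that `e^{-sy}` times the `Exp(λ)` density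
is `λ/(λ+s)` times the `Exp(λ+s)` density, which reduces everything to moments of `Exp(λ+1)`.
-/

open Real
open scoped ENNReal Nat

namespace ProbabilityTheory

section ExpMeasure

variable {r : ℝ}

lemma lintegral_expMeasure_eq (g : ℝ → ℝ≥0∞) :
    ∫⁻ x, g x ∂expMeasure r = ∫⁻ x, exponentialPDF r x * g x :=
  lintegral_withDensity_eq_lintegral_mul_non_measurable _
    (measurable_exponentialPDFReal r).ennreal_ofReal (ae_of_all _ fun _ => ENNReal.ofReal_lt_top) g

lemma ae_nonneg_expMeasure : ∀ᵐ x ∂expMeasure r, 0 ≤ x := by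
  have h : expMeasure r (Iio 0) = 0 := by
    rw [expMeasure, gammaMeasure, withDensity_apply _ measurableSet_Iio]
    exact lintegral_gammaPDF_of_nonpos le_rfl
  rw [ae_iff]
  simp only [not_le]
  exact h

lemma exponentialPDF_add {x y : ℝ} (hx : 0 ≤ x) (hy : 0 ≤ y) :
    exponentialPDF r (x + y) = ENNReal.ofReal (exp (-(r * y))) * exponentialPDF r x := by
  rw [exponentialPDF_of_nonneg (by positivity), exponentialPDF_of_nonneg hx,
    ← ENNReal.ofReal_mul (exp_pos _).le, mul_add, neg_add, exp_add]
  ring_nf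

lemma lintegral_expMeasure_ite_sub {y : ℝ} (hy : 0 ≤ y) (g : ℝ → ℝ≥0∞) :
    ∫⁻ x, (if y ≤ x then g (x - y) else 0) ∂expMeasure r
      = ENNReal.ofReal (exp (-(r * y))) * ∫⁻ x, g x ∂expMeasure r := by
  simp only [lintegral_expMeasure_eq]
  rw [← lintegral_add_right_eq_self _ y, ← lintegral_const_mul' _ _ ENNReal.ofReal_ne_top]
  congr 1 with x
  rcases le_or_gt 0 x with hx | hx
  · simp [hx, exponentialPDF_add hx hy, mul_assoc]
  · simp [hx.not_ge, exponentialPDF_of_neg hx]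

lemma lintegral_exp_neg_mul_expMeasure {s : ℝ} (hr : 0 ≤ r) (hrs : 0 < r + s)
    (g : ℝ → ℝ≥0∞) :
    ∫⁻ x, ENNReal.ofReal (exp (-(s * x))) * g x ∂expMeasure r
      = ENNReal.ofReal (r / (r + s)) * ∫⁻ x, g x ∂expMeasure (r + s) := by
  simp only [lintegral_expMeasure_eq]
  rw [← lintegral_const_mul' _ _ ENNReal.ofReal_ne_top]
  congr 1 with x
  rcases le_or_gt 0 x with hx | hx
  · rw [exponentialPDF_of_nonneg hx, exponentialPDF_of_nonneg hx, ← mul_assoc, ← mul_assoc,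
      ← ENNReal.ofReal_mul (by positivity), ← ENNReal.ofReal_mul (by positivity)]
    congr 2
    rw [mul_assoc, ← exp_add]
    field_simp
    ring_nf
  · simp [exponentialPDF_of_neg hx]

lemma lintegral_pow_expMeasure (hr : 0 < r) (n : ℕ) :
    ∫⁻ x, ENNReal.ofReal (x ^ n) ∂expMeasure r = ENNReal.ofReal (n ! / r ^ n) := by
  have hGamma : ∫ x in Ioi 0, r * (x ^ n * exp (-(r * x))) = n ! / r ^ n := by
    have h := integral_rpow_mul_exp_neg_mul_Ioi (a := n + 1) (by positivity) hr
    simp only [add_sub_cancel_right, rpow_natCast] at h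
    rw [integral_const_mul, h, Gamma_nat_eq_factorial, ← Nat.cast_add_one, rpow_natCast, one_div,
      inv_pow, pow_succ]
    field_simp
  -- a non-integrable function would have Bochner integral `0`
  have hint : IntegrableOn (fun x => r * (x ^ n * exp (-(r * x)))) (Ioi 0) :=
    .of_integral_ne_zero (by rw [hGamma]; positivity)
  have hpdf : (fun x => exponentialPDF r x * ENNReal.ofReal (x ^ n))
      = (Ici 0).indicator fun x => ENNReal.ofReal (r * (x ^ n * exp (-(r * x)))) := by
    ext x
    rcases le_or_gt 0 x with hx | hx
    · rw [indicator_of_mem (mem_Ici.2 hx), exponentialPDF_of_nonneg hx,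
        ← ENNReal.ofReal_mul (by positivity)]
      ring_nf
    · simp [exponentialPDF_of_neg hx, hx]
  rw [lintegral_expMeasure_eq, hpdf, lintegral_indicator measurableSet_Ici,
    ← Measure.restrict_congr_set Ioi_ae_eq_Ici, ← hGamma,
    ofReal_integral_eq_lintegral_ofReal hint]
  filter_upwards [ae_restrict_mem measurableSet_Ioi] with x (hx : 0 < x)
  positivity

end ExpMeasure

section TwoExponentials

variable {a b y : ℝ}

lemma lintegral_expMeasure_ite_sub_sq (ha : 0 < a) (hy : 0 ≤ y) :
    ∫⁻ x, ENNReal.ofReal (if y ≤ x then (x - y) ^ 2 else 0) ∂expMeasure a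
      = ENNReal.ofReal (exp (-(a * y))) * ENNReal.ofReal (2 / a ^ 2) := by
  simp only [apply_ite ENNReal.ofReal, ENNReal.ofReal_zero]
  rw [lintegral_expMeasure_ite_sub hy (fun t => ENNReal.ofReal (t ^ 2)),
    lintegral_pow_expMeasure ha 2]
  norm_num [Nat.factorial]

lemma lintegral_expMeasure_ite_sq_sub_sq (ha : 0 < a) (hy : 0 ≤ y) :
    ∫⁻ x, ENNReal.ofReal (if y ≤ x then x ^ 2 - y ^ 2 else 0) ∂expMeasure a
      = ENNReal.ofReal (exp (-(a * y))) *
          (ENNReal.ofReal (2 / a ^ 2) + ENNReal.ofReal (2 / a) * ENNReal.ofReal (y ^ 1)) := by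
  have hsplit (x : ℝ) (hxy : y ≤ x) : ENNReal.ofReal (x ^ 2 - y ^ 2)
      = ENNReal.ofReal ((x - y) ^ 2) + ENNReal.ofReal (2 * y) * ENNReal.ofReal ((x - y) ^ 1) := by
    have : 0 ≤ x - y := sub_nonneg.2 hxy
    rw [← ENNReal.ofReal_mul (by positivity), ← ENNReal.ofReal_add (by positivity) (by positivity)]
    ring_nf
  simp only [apply_ite ENNReal.ofReal, ENNReal.ofReal_zero]
  rw [lintegral_congr fun x => ite_congr rfl (hsplit x) fun _ => rfl,
    lintegral_expMeasure_ite_sub hy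
      (fun t => ENNReal.ofReal (t ^ 2) + ENNReal.ofReal (2 * y) * ENNReal.ofReal (t ^ 1)),
    lintegral_add_left (by fun_prop), lintegral_const_mul _ (by fun_prop),
    lintegral_pow_expMeasure ha 2, lintegral_pow_expMeasure ha 1,
    ← ENNReal.ofReal_mul (by positivity), ← ENNReal.ofReal_mul (by positivity)]
  norm_num [Nat.factorial]
  ring_nf

lemma lintegral_lintegral_expMeasure_ite_sub_sq (ha : 0 < a) (hb : 0 < b) :
    ∫⁻ y, ∫⁻ x, ENNReal.ofReal (if y ≤ x then (x - y) ^ 2 else 0) ∂expMeasure a ∂expMeasure b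
      = ENNReal.ofReal (b / (b + a) * (2 / a ^ 2)) := by
  have := isProbabilityMeasure_expMeasure (add_pos hb ha)
  rw [lintegral_congr_ae
      (ae_nonneg_expMeasure.mono fun y hy => lintegral_expMeasure_ite_sub_sq ha hy),
    lintegral_exp_neg_mul_expMeasure hb.le (add_pos hb ha), lintegral_const, measure_univ,
    mul_one, ← ENNReal.ofReal_mul (by positivity)]

lemma lintegral_lintegral_expMeasure_ite_sq_sub_sq (ha : 0 < a) (hb : 0 < b) :
    ∫⁻ y, ∫⁻ x, ENNReal.ofReal (if y ≤ x then x ^ 2 - y ^ 2 else 0) ∂expMeasure a ∂expMeasure b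
      = ENNReal.ofReal (b / (b + a) * (2 / a ^ 2 + 2 / a * (1 / (b + a)))) := by
  have := isProbabilityMeasure_expMeasure (add_pos hb ha)
  rw [lintegral_congr_ae
      (ae_nonneg_expMeasure.mono fun y hy => lintegral_expMeasure_ite_sq_sub_sq ha hy),
    lintegral_exp_neg_mul_expMeasure hb.le (add_pos hb ha),
    lintegral_add_left (by fun_prop), lintegral_const_mul _ (by fun_prop),
    lintegral_const, measure_univ, lintegral_pow_expMeasure (add_pos hb ha) 1, mul_one,
    ← ENNReal.ofReal_mul (by positivity), ← ENNReal.ofReal_add (by positivity) (by positivity),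
    ← ENNReal.ofReal_mul (by positivity)]
  norm_num

end TwoExponentials

lemma IndepFun.integral_comp_prod_eq_toReal_lintegral_map {Ω α β : Type*} [MeasurableSpace Ω]
    [MeasurableSpace α] [MeasurableSpace β] {μ : Measure Ω} [IsFiniteMeasure μ]
    {X : Ω → α} {Y : Ω → β} (hXY : IndepFun X Y μ) (hX : AEMeasurable X μ)
    (hY : AEMeasurable Y μ) {f : α × β → ℝ} (hf : Measurable f)
    (hf_nonneg : ∀ᵐ ω ∂μ, 0 ≤ f (X ω, Y ω)) :
    ∫ ω, f (X ω, Y ω) ∂μ = (∫⁻ y, ∫⁻ x, ENNReal.ofReal (f (x, y)) ∂μ.map X ∂μ.map Y).toReal := by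
  rw [integral_eq_lintegral_of_nonneg_ae hf_nonneg
      (hf.comp_aemeasurable (hX.prodMk hY)).aestronglyMeasurable,
    ← lintegral_map' hf.ennreal_ofReal.aemeasurable (hX.prodMk hY),
    hXY.map_prod_eq_prod_map_map hX hY, lintegral_prod_symm _ hf.ennreal_ofReal.aemeasurable]

end ProbabilityTheory

/-- For independent exponential fading powers (`z1` with mean 1, `z2`
with mean `γ`), `E[(z1 − z2)²·1{z1 ≥ z2}] = 2/(1+γ)` and
`E[(z1² − z2²)·1{z1 ≥ z2}] = 2(1+2γ)/(1+γ)²`. -/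
theorem exponential_fading_second_moments
    {Ω : Type*} [MeasurableSpace Ω] (μ : Measure Ω) [IsProbabilityMeasure μ]
    (z1 z2 : Ω → ℝ) (hz1m : Measurable z1) (hz2m : Measurable z2)
    (hindep : IndepFun z1 z2 μ)
    (γ : ℝ) (hγ : 0 < γ)
    (hz1law : μ.map z1 = expMeasure 1)
    (hz2law : μ.map z2 = expMeasure γ⁻¹) :
    (∫ ω, (if z2 ω ≤ z1 ω then (z1 ω - z2 ω) ^ 2 else 0) ∂μ) = 2 / (1 + γ) ∧
    (∫ ω, (if z2 ω ≤ z1 ω then (z1 ω) ^ 2 - (z2 ω) ^ 2 else 0) ∂μ)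
      = 2 * (1 + 2 * γ) / (1 + γ) ^ 2 := by
  have hrate : 0 < γ⁻¹ := inv_pos.2 hγ
  have hz2_nonneg : ∀ᵐ ω ∂μ, 0 ≤ z2 ω :=
    ae_of_ae_map hz2m.aemeasurable (hz2law ▸ ae_nonneg_expMeasure)
  have hle : MeasurableSet {p : ℝ × ℝ | p.2 ≤ p.1} := measurableSet_le measurable_snd measurable_fst
  constructor
  · refine (hindep.integral_comp_prod_eq_toReal_lintegral_map hz1m.aemeasurable hz2m.aemeasurable
      (f := fun p => if p.2 ≤ p.1 then (p.1 - p.2) ^ 2 else 0)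
      (Measurable.ite hle (by fun_prop) measurable_const)
      (ae_of_all _ fun ω => by positivity)).trans ?_
    dsimp only
    rw [hz1law, hz2law, lintegral_lintegral_expMeasure_ite_sub_sq one_pos hrate,
      ENNReal.toReal_ofReal (by positivity)]
    field_simp
  · refine (hindep.integral_comp_prod_eq_toReal_lintegral_map hz1m.aemeasurable hz2m.aemeasurable
      (f := fun p => if p.2 ≤ p.1 then p.1 ^ 2 - p.2 ^ 2 else 0)
      (Measurable.ite hle (by fun_prop) measurable_const) ?_).trans ?_
    · filter_upwards [hz2_nonneg] with ω hω
      split_ifs with h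
      · exact sub_nonneg.2 (pow_le_pow_left₀ hω h 2)
      · rfl
    dsimp only
    rw [hz1law, hz2law, lintegral_lintegral_expMeasure_ite_sq_sub_sq one_pos hrate,
      ENNReal.toReal_ofReal (by positivity)]
    field_simp
    ring
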